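/- For every positive integer n, (2^{n²+n}/n!) · ∏_{j=0}^{n-1} [Γ((n+2+j)/2)·Γ(1/2) / (Γ((1+j)/2)·Γ((1+j)/2)·Γ((4+j)/2))] = 2^{n²} · ∏_{k=1}^{n} Cat(k). -/

import Mathlib

/-- The k-th Catalan number as a real number: Cat(k) = (1/(k+1))·C(2k,k). -/
noncomputable def catR (k : ℕ) : ℝ := (1 / ((k : ℝ) + 1)) * (Nat.choose (2 * k) k : ℝ)

/-!
Write `P n` for the product over `j < n`. Shifting the numerator index, `P (n + 1) / P n`
collapses to `Γ(n + 1) Γ(n + 3/2) Γ(1/2) / (Γ((n+1)/2)² Γ((n+2)/2) Γ((n+4)/2))`, and two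
applications of Legendre's duplication formula (at `n` and at `2n + 1`) turn this into
`(2n+1)! / ((n+2) n!²) = (n+1) Cat(n+1) / 2`. Hence `P n = n! ∏_{k ≤ n} Cat(k) / 2ⁿ`.
-/

open Real Finset

lemma Gamma_add_one_div_two_mul_Gamma_add_two_div_two (n : ℕ) :
    Gamma (((n : ℝ) + 1) / 2) * Gamma (((n : ℝ) + 2) / 2) = n.factorial * √π / 2 ^ n := by
  have h := Gamma_mul_Gamma_add_half (((n : ℝ) + 1) / 2)
  rw [show ((n : ℝ) + 1) / 2 + 1 / 2 = ((n : ℝ) + 2) / 2 by ring,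
    show 2 * (((n : ℝ) + 1) / 2) = n + 1 by ring, show (1 : ℝ) - (n + 1) = -n by ring,
    Gamma_nat_eq_factorial, rpow_neg zero_le_two, rpow_natCast] at h
  rw [h, div_eq_mul_inv]
  ring

lemma catR_succ (n : ℕ) :
    catR (n + 1) = 2 * (2 * n + 1).factorial / ((n + 1) * (n + 2) * n.factorial ^ 2) := by
  rw [catR, Nat.cast_choose ℝ (by omega : n + 1 ≤ 2 * (n + 1)),
    show 2 * (n + 1) - (n + 1) = n + 1 by omega, show 2 * (n + 1) = 2 * n + 1 + 1 by ring]
  push_cast [Nat.factorial_succ]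
  field_simp
  ring

noncomputable def gammaNum (n j : ℕ) : ℝ := Gamma (((n : ℝ) + 2 + j) / 2) * Gamma (1 / 2)

noncomputable def gammaDen (j : ℕ) : ℝ :=
  Gamma ((1 + (j : ℝ)) / 2) * Gamma ((1 + (j : ℝ)) / 2) * Gamma ((4 + (j : ℝ)) / 2)

noncomputable def gammaProd (n : ℕ) : ℝ := ∏ j ∈ range n, gammaNum n j / gammaDen j

lemma gammaNum_pos (n j : ℕ) : 0 < gammaNum n j := by
  unfold gammaNum
  have := Gamma_pos_of_pos (by positivity : (0 : ℝ) < ((n : ℝ) + 2 + j) / 2)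
  have := Gamma_pos_of_pos (by norm_num : (0 : ℝ) < 1 / 2)
  positivity

lemma gammaNum_succ (n j : ℕ) : gammaNum (n + 1) j = gammaNum n (j + 1) := by
  unfold gammaNum
  push_cast
  ring_nf

lemma prod_gammaNum_succ_mul (n : ℕ) :
    (∏ j ∈ range (n + 1), gammaNum (n + 1) j) * gammaNum n 0 =
      (∏ j ∈ range n, gammaNum n j) * (gammaNum n n * gammaNum n (n + 1)) := by
  simp_rw [gammaNum_succ]
  rw [← prod_range_succ', prod_range_succ, prod_range_succ, mul_assoc]

lemma gammaNum_mul_gammaNum (n : ℕ) :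
    gammaNum n n * gammaNum n (n + 1) =
      (2 * n + 1).factorial * √π * π / 2 ^ (2 * n + 1) := by
  have h := Gamma_add_one_div_two_mul_Gamma_add_two_div_two (2 * n + 1)
  have hn : ((n : ℝ) + 2 + n) / 2 = n + 1 := by ring
  rw [show (((2 * n + 1 : ℕ) : ℝ) + 1) / 2 = n + 1 by push_cast; ring,
    show (((2 * n + 1 : ℕ) : ℝ) + 2) / 2 = ((n : ℝ) + 2 + (n + 1 : ℕ)) / 2 by push_cast; ring]
    at h
  unfold gammaNum
  rw [hn, Gamma_one_half_eq]
  calc Gamma (n + 1) * √π * (Gamma (((n : ℝ) + 2 + (n + 1 : ℕ)) / 2) * √π)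
      = Gamma (n + 1) * Gamma (((n : ℝ) + 2 + (n + 1 : ℕ)) / 2) * √π ^ 2 := by ring
    _ = _ := by rw [h, sq_sqrt pi_pos.le]; ring

lemma gammaNum_zero_mul_gammaDen (n : ℕ) :
    gammaNum n 0 * gammaDen n = n.factorial ^ 2 * π * √π * (n + 2) / 2 ^ (2 * n + 1) := by
  have h := Gamma_add_one_div_two_mul_Gamma_add_two_div_two n
  have hGamma : Gamma ((4 + (n : ℝ)) / 2) = ((n : ℝ) + 2) / 2 * Gamma (((n : ℝ) + 2) / 2) := by
    rw [← Gamma_add_one (by positivity)]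
    ring_nf
  unfold gammaNum gammaDen
  rw [hGamma, Gamma_one_half_eq, Nat.cast_zero, add_zero, add_comm 1 (n : ℝ)]
  calc Gamma (((n : ℝ) + 2) / 2) * √π *
        (Gamma (((n : ℝ) + 1) / 2) * Gamma (((n : ℝ) + 1) / 2) *
          (((n : ℝ) + 2) / 2 * Gamma (((n : ℝ) + 2) / 2)))
      = (Gamma (((n : ℝ) + 1) / 2) * Gamma (((n : ℝ) + 2) / 2)) ^ 2 * √π * ((n + 2) / 2) := by
        ring
    _ = _ := by rw [h, div_pow, mul_pow, sq_sqrt pi_pos.le]; ring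

lemma gammaProd_succ (n : ℕ) :
    gammaProd (n + 1) = gammaProd n * ((n + 1) * catR (n + 1) / 2) := by
  have hratio : gammaNum n n * gammaNum n (n + 1) / (gammaNum n 0 * gammaDen n) =
      (n + 1) * catR (n + 1) / 2 := by
    rw [gammaNum_mul_gammaNum, gammaNum_zero_mul_gammaDen, catR_succ]
    field_simp
  have hnum := eq_div_of_mul_eq (gammaNum_pos n 0).ne' (prod_gammaNum_succ_mul n)
  unfold gammaProd
  rw [prod_div_distrib, prod_div_distrib, hnum, prod_range_succ gammaDen, ← hratio]
  ring

lemma gammaProd_eq (n : ℕ) :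
    gammaProd n = n.factorial * (∏ k ∈ Icc 1 n, catR k) / 2 ^ n := by
  induction n with
  | zero => simp [gammaProd]
  | succ n ih =>
    rw [gammaProd_succ, ih, prod_Icc_succ_top (by omega), Nat.factorial_succ]
    push_cast
    field_simp
    ring

theorem stmt3_general (n : ℕ) :
    ((2 : ℝ) ^ (n ^ 2 + n) / (n.factorial : ℝ)) *
      ∏ j ∈ Finset.range n,
        Real.Gamma (((n : ℝ) + 2 + j) / 2) * Real.Gamma (1 / 2) /
          (Real.Gamma ((1 + (j : ℝ)) / 2) * Real.Gamma ((1 + (j : ℝ)) / 2) *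
            Real.Gamma ((4 + (j : ℝ)) / 2)) =
      (2 : ℝ) ^ (n ^ 2) * ∏ k ∈ Finset.Icc 1 n, catR k := by
  change 2 ^ (n ^ 2 + n) / (n.factorial : ℝ) * gammaProd n = _
  rw [gammaProd_eq, pow_add]
  field_simp

/-- (2^{n²+n}/n!)·∏_{j=0}^{n-1} Γ((n+2+j)/2)Γ(1/2)/(Γ((1+j)/2)²Γ((4+j)/2))
= 2^{n²}·∏_{k=1}^n Cat(k). -/
theorem stmt3 (n : ℕ) (hn : 0 < n) :
    ((2 : ℝ) ^ (n ^ 2 + n) / (n.factorial : ℝ)) *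
      ∏ j ∈ Finset.range n,
        Real.Gamma (((n : ℝ) + 2 + j) / 2) * Real.Gamma (1 / 2) /
          (Real.Gamma ((1 + (j : ℝ)) / 2) * Real.Gamma ((1 + (j : ℝ)) / 2) *
            Real.Gamma ((4 + (j : ℝ)) / 2)) =
      (2 : ℝ) ^ (n ^ 2) * ∏ k ∈ Finset.Icc 1 n, catR k :=
  stmt3_general n
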